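/- Let 𝓗 be a finite set of subgroups of a finite group G. For the pretty good measurement M_H = Σ^{-1/2} P_H^{⊗k} Σ^{-1/2} where P_H is the projection onto the support of ρ_H and Σ = Σ_{H'∈𝓗} P_{H'}^{⊗k}, the error probability on input ρ_H^{⊗k} satisfies tr((I − M_H) ρ_H^{⊗k}) ≤ 4 Σ_{H'≠H} (|H∩H'|/|H'|)^k. -/

import Mathlib

/-!
Write `S = P_H^{⊗k}`, `T = ∑_{H' ≠ H} P_{H'}^{⊗k}` and `R = (S + T)^{-1/2}`. Since `ρ_H^{⊗k}` is
the multiple `(|H|/|G|)^k S` of the projection `S`, the error is `(|H|/|G|)^k (tr S - tr RSRS)`,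
while `(|H|/|G|)^k tr TS = ∑_{H' ≠ H} (|H ∩ H'|/|H'|)^k`; so it suffices that
`tr S - tr RSRS ≤ tr TS`. The scalar inequality `λ^{-1/2} ≥ 3/2 - λ/2` (for `λ > 0`) gives
`tr RS ≥ tr S - tr TS / 2`, Cauchy–Schwarz for the pair `S`, `SRS` gives
`(tr RS)² ≤ tr S · tr RSRS`, and the two combine to the claim.
-/

noncomputable section

open scoped BigOperators ComplexOrder

open Classical in
/-- The coset state `ρ_H = (1/|G|) ∑_g |gH⟩⟨gH|`; its `(x, y)` entry is
`1/|G|` if `x⁻¹ y ∈ H` and `0` otherwise. -/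
def cosetState {G : Type*} [Group G] [Fintype G] (H : Subgroup G) : Matrix G G ℂ :=
  fun x y => if x⁻¹ * y ∈ H then (1 : ℂ) / (Fintype.card G) else 0

/-- `k`-fold tensor power of a matrix. -/
def tensorPow {n : Type*} [Fintype n] (M : Matrix n n ℂ) (k : ℕ) :
    Matrix (Fin k → n) (Fin k → n) ℂ :=
  fun x y => ∏ i, M (x i) (y i)

/-- Trace norm `‖Y‖₁ = tr √(Yᴴ Y)`. -/
def traceNorm {n : Type*} [Fintype n] [DecidableEq n] (Y : Matrix n n ℂ) : ℝ :=
  (((Matrix.posSemidef_conjTranspose_mul_self Y).1.eigenvectorUnitary.1 *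
      Matrix.diagonal (fun i => ((Real.sqrt
        ((Matrix.posSemidef_conjTranspose_mul_self Y).1.eigenvalues i) : ℝ) : ℂ)) *
      (star (Matrix.posSemidef_conjTranspose_mul_self Y).1.eigenvectorUnitary :
        Matrix n n ℂ)).trace).re

/-- Operator (spectral) norm of a matrix. -/
def opNorm {n : Type*} [Fintype n] [DecidableEq n] (M : Matrix n n ℂ) : ℝ :=
  ‖Matrix.toEuclideanCLM (𝕜 := ℂ) M‖

/-- Square root of the Moore–Penrose pseudoinverse of a Hermitian matrix
(junk value `0` on non-Hermitian input). -/
def pinvSqrt {n : Type*} [Fintype n] [DecidableEq n] (A : Matrix n n ℂ) : Matrix n n ℂ :=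
  if h : A.IsHermitian then
    h.eigenvectorUnitary.1 *
      Matrix.diagonal (fun i => ((Real.sqrt (h.eigenvalues i))⁻¹ : ℂ)) *
      (star h.eigenvectorUnitary : Matrix n n ℂ)
  else 0

open Matrix
open scoped MatrixOrder

lemma three_halves_le_inv_sqrt_add_half {x : ℝ} (hx : 0 < x) : 3 / 2 ≤ (√x)⁻¹ + x / 2 := by
  obtain ⟨s, hs, rfl⟩ : ∃ s, 0 < s ∧ x = s ^ 2 :=
    ⟨√x, Real.sqrt_pos.mpr hx, (Real.sq_sqrt hx.le).symm⟩
  rw [Real.sqrt_sq hs.le, ← sub_nonneg]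
  have key : s⁻¹ + s ^ 2 / 2 - 3 / 2 = (s - 1) ^ 2 * (s + 2) / (2 * s) := by
    field_simp; ring
  rw [key]; positivity

namespace Matrix

variable {n : Type*} [Fintype n]

lemma trace_mul_nonneg {A B : Matrix n n ℂ} (hA : 0 ≤ A) (hB : 0 ≤ B) :
    0 ≤ (A * B).trace := by
  classical
  obtain ⟨C, rfl⟩ := CStarAlgebra.nonneg_iff_eq_star_mul_self.mp hB
  rw [← mul_assoc, trace_mul_comm, ← mul_assoc]
  exact (star_right_conjugate_nonneg hA C).posSemidef.trace_nonneg

lemma re_trace_mul_nonneg {A B : Matrix n n ℂ} (hA : 0 ≤ A) (hB : 0 ≤ B) :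
    0 ≤ (A * B).trace.re :=
  (Complex.nonneg_iff.mp (trace_mul_nonneg hA hB)).1

lemma re_trace_conjTranspose_mul_sq_le (A B : Matrix n n ℂ) :
    (Aᴴ * B).trace.re ^ 2 ≤ (Aᴴ * A).trace.re * (Bᴴ * B).trace.re := by
  have hquad (c : ℝ) : 0 ≤ (Aᴴ * A).trace.re * (c * c) + 2 * (Aᴴ * B).trace.re * c
      + (Bᴴ * B).trace.re := by
    have h := (Complex.nonneg_iff.mp
      (posSemidef_conjTranspose_mul_self ((c : ℂ) • A + B)).trace_nonneg).1
    have hswap : (Bᴴ * A).trace.re = (Aᴴ * B).trace.re := by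
      rw [← conjTranspose_conjTranspose A, ← conjTranspose_mul, trace_conjTranspose,
        conjTranspose_conjTranspose, Complex.star_def, Complex.conj_re]
    simp only [conjTranspose_add, conjTranspose_smul, Complex.star_def, Complex.conj_ofReal,
      add_mul, mul_add, smul_mul, Matrix.mul_smul, smul_smul, trace_add, trace_smul, smul_eq_mul,
      ← Complex.ofReal_mul, Complex.add_re, Complex.re_ofReal_mul, hswap] at h
    linarith
  have hdiscrim := discrim_le_zero hquad
  rw [discrim] at hdiscrim
  nlinarith

lemma cfc_indicator_zero_mul_self [DecidableEq n] (A : Matrix n n ℂ) :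
    cfc (fun x : ℝ => if x = 0 then 1 else 0) A * A = 0 := by
  by_cases hA : IsSelfAdjoint A
  · nth_rw 2 [← cfc_id' ℝ A]
    rw [← cfc_mul _ _ A (A.finite_real_spectrum.continuousOn _), ← cfc_zero ℝ A]
    exact cfc_congr fun x _ => by by_cases hx : x = 0 <;> simp [hx]
  · rw [cfc_apply_of_not_predicate A hA, zero_mul]

end Matrix

section PrettyGoodMeasurement

variable {n : Type*} [Fintype n] [DecidableEq n]

lemma pinvSqrt_eq_cfc {A : Matrix n n ℂ} (hA : A.IsHermitian) :
    pinvSqrt A = cfc (fun x : ℝ => (√x)⁻¹) A := by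
  rw [hA.cfc_eq, pinvSqrt, dif_pos hA, IsHermitian.cfc]
  simp [Function.comp_def]

/-- `λ^{-1/2} ≥ 3/2 - λ/2` away from `0`, and the kernel projection `Z` of `S + T` satisfies
`Z S = -Z T`, so its contribution to the trace against `S` has the right sign. -/
lemma re_trace_pinvSqrt_mul_ge {S T : Matrix n n ℂ} (hS : 0 ≤ S) (hT : 0 ≤ T) :
    3 / 2 * S.trace.re - ((S + T) * S).trace.re / 2 ≤ (pinvSqrt (S + T) * S).trace.re := by
  set A := S + T
  have hA : 0 ≤ A := add_nonneg hS hT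
  have hc : ∀ f : ℝ → ℝ, ContinuousOn f (spectrum ℝ A) := A.finite_real_spectrum.continuousOn
  set g : ℝ → ℝ := fun x => (√x)⁻¹ + x / 2 - 3 / 2 + 3 / 2 * (if x = 0 then 1 else 0)
  set Z := cfc (fun x : ℝ => if x = 0 then 1 else 0) A
  have hdecomp : pinvSqrt A = cfc g A + (3 / 2 : ℝ) • (1 - Z) - (1 / 2 : ℝ) • A := by
    calc pinvSqrt A
        = cfc (fun x => g x + 3 / 2 * (1 - if x = 0 then 1 else 0) - 1 / 2 * x) A := by
          rw [pinvSqrt_eq_cfc hA.posSemidef.isHermitian]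
          exact cfc_congr fun x _ => by simp only [g]; split_ifs <;> ring
      _ = _ := by
          rw [cfc_sub (hf := hc _) (hg := hc _), cfc_add (hf := hc _) (hg := hc _),
            cfc_const_mul _ _ _ (hc _), cfc_const_mul _ (fun x => x) A (hc _),
            cfc_sub (hf := hc _) (hg := hc _), cfc_const_one ℝ A, cfc_id' ℝ A]
  have hg : 0 ≤ cfc g A := cfc_nonneg fun x hx => by
    rcases (spectrum_nonneg_of_nonneg hA hx).eq_or_lt with rfl | hx0
    · simp [g]
    · simp only [g, hx0.ne', if_false]
      linarith [three_halves_le_inv_sqrt_add_half hx0]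
  have hZS : Z * S = -(Z * T) := by
    rw [eq_neg_iff_add_eq_zero, ← mul_add]
    exact cfc_indicator_zero_mul_self A
  have hZT : 0 ≤ (Z * T).trace.re :=
    re_trace_mul_nonneg (cfc_nonneg fun x _ => by split_ifs <;> norm_num) hT
  have hgS := re_trace_mul_nonneg hg hS
  rw [hdecomp]
  simp only [add_mul, sub_mul, smul_mul, one_mul, trace_add, trace_sub, trace_smul, hZS,
    trace_neg, Complex.add_re, Complex.sub_re, Complex.neg_re, Complex.real_smul,
    Complex.re_ofReal_mul]
  linarith

lemma re_trace_one_sub_pgm_mul_le {S T : Matrix n n ℂ} (hS : IsStarProjection S) (hT : 0 ≤ T) :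
    ((1 - pinvSqrt (S + T) * S * pinvSqrt (S + T)) * S).trace.re ≤ (T * S).trace.re := by
  have hR : (pinvSqrt (S + T))ᴴ = pinvSqrt (S + T) := by
    rw [pinvSqrt_eq_cfc (add_nonneg hS.nonneg hT).posSemidef.isHermitian]
    exact IsSelfAdjoint.cfc
  set R := pinvSqrt (S + T)
  have hSS : S * S = S := hS.isIdempotentElem.eq
  have hSS' (X : Matrix n n ℂ) : S * (S * X) = S * X := by rw [← mul_assoc, hSS]
  have hSh : Sᴴ = S := hS.isSelfAdjoint.star_eq
  set d := S.trace.re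
  set y := (R * S).trace.re
  set x := (R * S * R * S).trace.re
  set t := (T * S).trace.re
  have htangent : 3 / 2 * d - (d + t) / 2 ≤ y := by
    have h := re_trace_pinvSqrt_mul_ge hS.nonneg hT
    rwa [add_mul, hSS, trace_add, Complex.add_re] at h
  have hCS : y ^ 2 ≤ d * x := by
    have h := re_trace_conjTranspose_mul_sq_le S (S * R * S)
    simp only [conjTranspose_mul, hSh, hR, mul_assoc, hSS', hSS] at h
    rwa [trace_mul_comm S, mul_assoc, hSS, trace_mul_comm S, mul_assoc, mul_assoc, mul_assoc,
      hSS, ← mul_assoc, ← mul_assoc] at h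
  have hx : 0 ≤ x := re_trace_mul_nonneg
    (by simpa only [star_eq_conjTranspose, hR] using star_left_conjugate_nonneg hS.nonneg R)
    hS.nonneg
  have hd : 0 ≤ d := (Complex.nonneg_iff.mp hS.nonneg.posSemidef.trace_nonneg).1
  rw [sub_mul, one_mul, trace_sub, Complex.sub_re]
  rcases hd.eq_or_lt with hd0 | hd0
  · linarith [re_trace_mul_nonneg hT hS.nonneg]
  · -- `d (d - x) ≤ d² - y² = 2d (d - y) - (d - y)² ≤ d t`
    refine le_of_mul_le_mul_left ?_ hd0
    nlinarith [sq_nonneg (d - y), mul_nonneg hd (sub_nonneg.2 htangent)]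

end PrettyGoodMeasurement

section TensorPower

variable {n : Type*} [Fintype n]

lemma tensorPow_mul (A B : Matrix n n ℂ) (k : ℕ) :
    tensorPow (A * B) k = tensorPow A k * tensorPow B k := by
  ext x y
  simp only [tensorPow, mul_apply, Finset.prod_univ_sum, Fintype.piFinset_univ,
    Finset.prod_mul_distrib]

lemma trace_tensorPow (A : Matrix n n ℂ) (k : ℕ) : (tensorPow A k).trace = A.trace ^ k := by
  simp only [trace, diag, tensorPow, ← Fin.prod_const, Finset.prod_univ_sum,
    Fintype.piFinset_univ]

lemma conjTranspose_tensorPow (A : Matrix n n ℂ) (k : ℕ) :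
    (tensorPow A k)ᴴ = tensorPow Aᴴ k := by
  ext x y
  simp [tensorPow, conjTranspose_apply]

lemma tensorPow_smul (c : ℂ) (A : Matrix n n ℂ) (k : ℕ) :
    tensorPow (c • A) k = c ^ k • tensorPow A k := by
  ext x y
  simp [tensorPow, Finset.prod_mul_distrib]

lemma IsStarProjection.tensorPow {P : Matrix n n ℂ} (hP : IsStarProjection P) (k : ℕ) :
    IsStarProjection (tensorPow P k) where
  isIdempotentElem := by rw [IsIdempotentElem, ← tensorPow_mul, hP.isIdempotentElem.eq]
  isSelfAdjoint := by
    rw [IsSelfAdjoint, star_eq_conjTranspose, conjTranspose_tensorPow, ← star_eq_conjTranspose,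
      hP.isSelfAdjoint.star_eq]

end TensorPower

section CosetStates

variable {G : Type*} [Group G] [Fintype G]

open Classical in
lemma sum_ite_mem_subgroup {R : Type*} [NonAssocSemiring R] (K : Subgroup G) (c : R) :
    ∑ h, (if h ∈ K then c else 0) = Nat.card K * c := by
  simp [Finset.sum_ite, Nat.card_eq_fintype_card, Fintype.card_subtype]

lemma sum_inv_mul_mul_inv_mul {R : Type*} [Mul R] [AddCommMonoid R] (x y : G) (f g : G → R) :
    ∑ z, f (x⁻¹ * z) * g (z⁻¹ * y) = ∑ h, f h * g (h⁻¹ * (x⁻¹ * y)) :=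
  Fintype.sum_equiv (Equiv.mulLeft x⁻¹) _ _ fun z => by simp [mul_assoc]

def cosetProj (K : Subgroup G) : Matrix G G ℂ :=
  ((Fintype.card G : ℂ) / (Nat.card K : ℂ)) • cosetState K

lemma cosetState_eq_smul_cosetProj (K : Subgroup G) :
    cosetState K = ((Nat.card K : ℂ) / Fintype.card G) • cosetProj K := by
  have hG : (Fintype.card G : ℂ) ≠ 0 := Nat.cast_ne_zero.mpr Fintype.card_ne_zero
  have hK : (Nat.card K : ℂ) ≠ 0 := Nat.cast_ne_zero.mpr Nat.card_pos.ne'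
  rw [cosetProj, smul_smul, div_mul_div_comm, mul_comm, div_self (mul_ne_zero hG hK), one_smul]

open Classical in
lemma cosetProj_apply (K : Subgroup G) (x y : G) :
    cosetProj K x y = if x⁻¹ * y ∈ K then (Nat.card K : ℂ)⁻¹ else 0 := by
  have hG : (Fintype.card G : ℂ) ≠ 0 := Nat.cast_ne_zero.mpr Fintype.card_ne_zero
  simp only [cosetProj, cosetState, Matrix.smul_apply, smul_eq_mul]
  split_ifs
  · field_simp
  · simp

lemma isStarProjection_cosetProj (K : Subgroup G) : IsStarProjection (cosetProj K) where
  isIdempotentElem := by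
    classical
    ext x y
    have hK : (Nat.card K : ℂ) ≠ 0 := Nat.cast_ne_zero.mpr Nat.card_pos.ne'
    set c := (Nat.card K : ℂ)⁻¹
    simp only [mul_apply, cosetProj_apply]
    calc ∑ z, (if x⁻¹ * z ∈ K then c else 0) * (if z⁻¹ * y ∈ K then c else 0)
        = ∑ h, (if h ∈ K then c else 0) * (if h⁻¹ * (x⁻¹ * y) ∈ K then c else 0) :=
          sum_inv_mul_mul_inv_mul x y (fun h => if h ∈ K then c else 0)
            (fun h => if h ∈ K then c else 0)
      _ = ∑ h, if h ∈ K then (if x⁻¹ * y ∈ K then c * c else 0) else 0 :=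
          Finset.sum_congr rfl fun h _ => by
            by_cases hh : h ∈ K
            · simp [hh, K.mul_mem_cancel_left (K.inv_mem hh)]
            · simp [hh]
      _ = if x⁻¹ * y ∈ K then c else 0 := by
          rw [sum_ite_mem_subgroup]
          split_ifs
          · simp only [c]; field_simp
          · simp
  isSelfAdjoint := by
    classical
    ext x y
    simp only [star_apply, cosetProj_apply, ← K.inv_mem_iff (x := y⁻¹ * x), _root_.mul_inv_rev,
      inv_inv]
    split_ifs <;> simp

lemma trace_cosetProj_mul_cosetState (K H : Subgroup G) :
    (cosetProj K * cosetState H).trace = Nat.card ↥(H ⊓ K) / Nat.card K := by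
  classical
  have hG : (Fintype.card G : ℂ) ≠ 0 := Nat.cast_ne_zero.mpr Fintype.card_ne_zero
  have hrow (x : G) : ∑ z, cosetProj K x z * cosetState H z x
      = Nat.card ↥(H ⊓ K) * ((Nat.card K : ℂ)⁻¹ * (1 / Fintype.card G)) := by
    simp only [cosetProj_apply, cosetState]
    rw [sum_inv_mul_mul_inv_mul x x (fun h => if h ∈ K then _ else 0)
      (fun h => if h ∈ H then _ else 0), ← sum_ite_mem_subgroup]
    refine Finset.sum_congr rfl fun h _ => ?_
    simp only [inv_mul_cancel, mul_one, inv_mem_iff, Subgroup.mem_inf]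
    split_ifs <;> simp_all
  simp only [trace, diag, mul_apply, hrow, Finset.sum_const, Finset.card_univ, nsmul_eq_mul]
  field_simp

end CosetStates

open Classical in
/-- Error bound for the pretty good measurement on k copies of coset states. -/
theorem pgm_error_bound {G : Type*} [Group G] [Fintype G] [DecidableEq G]
    (𝓗 : Finset (Subgroup G)) (k : ℕ) (H : Subgroup G) (hH : H ∈ 𝓗)
    (P : Subgroup G → Matrix G G ℂ)
    (hPdef : ∀ K : Subgroup G, P K = ((Fintype.card G : ℂ) / (Nat.card ↥K : ℂ)) • cosetState K)
    (Sig : Matrix (Fin k → G) (Fin k → G) ℂ)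
    (hSig : Sig = ∑ K ∈ 𝓗, tensorPow (P K) k) :
    ((((1 : Matrix (Fin k → G) (Fin k → G) ℂ) -
        pinvSqrt Sig * tensorPow (P H) k * pinvSqrt Sig) *
      tensorPow (cosetState H) k).trace).re ≤
      4 * ∑ H' ∈ 𝓗.erase H, ((Nat.card ↥(H ⊓ H') : ℝ) / (Nat.card ↥H' : ℝ)) ^ k := by
  obtain rfl : P = cosetProj := funext hPdef
  set S := tensorPow (cosetProj H) k
  set T := ∑ K ∈ 𝓗.erase H, tensorPow (cosetProj K) k
  have hSig : Sig = S + T := by rw [hSig, ← Finset.add_sum_erase _ _ hH]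
  have hT : 0 ≤ T :=
    Finset.sum_nonneg fun K _ => ((isStarProjection_cosetProj K).tensorPow k).nonneg
  set e : ℝ := ((Nat.card H : ℝ) / Fintype.card G) ^ k
  have hρ : tensorPow (cosetState H) k = (e : ℂ) • S := by
    rw [cosetState_eq_smul_cosetProj, tensorPow_smul]
    push_cast [e]
    rfl
  have hsum : (T * tensorPow (cosetState H) k).trace.re
      = ∑ H' ∈ 𝓗.erase H, ((Nat.card ↥(H ⊓ H') : ℝ) / (Nat.card ↥H' : ℝ)) ^ k := by
    rw [Finset.sum_mul, trace_sum, Complex.re_sum]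
    refine Finset.sum_congr rfl fun K _ => ?_
    rw [← tensorPow_mul, trace_tensorPow, trace_cosetProj_mul_cosetState,
      ← Complex.ofReal_natCast, ← Complex.ofReal_natCast, ← Complex.ofReal_div,
      ← Complex.ofReal_pow, Complex.ofReal_re]
  calc _ = e * ((1 - pinvSqrt (S + T) * S * pinvSqrt (S + T)) * S).trace.re := by
        rw [hρ, hSig, Matrix.mul_smul, trace_smul, smul_eq_mul, Complex.re_ofReal_mul]
    _ ≤ e * (T * S).trace.re :=
        mul_le_mul_of_nonneg_left
          (re_trace_one_sub_pgm_mul_le ((isStarProjection_cosetProj H).tensorPow k) hT)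
          (by positivity)
    _ = ∑ H' ∈ 𝓗.erase H, ((Nat.card ↥(H ⊓ H') : ℝ) / (Nat.card ↥H' : ℝ)) ^ k := by
        rw [← hsum, hρ, Matrix.mul_smul, trace_smul, smul_eq_mul, Complex.re_ofReal_mul]
    _ ≤ _ := le_mul_of_one_le_left (by positivity) (by norm_num)
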